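/- Let 0 < a < b and k ∈ ℝ. Viewing the square hyperbola S_k(aI, bI) as a subset of ℂ via the inclusion of the upper half-plane in ℂ, the intersection of its closure in ℂ with the real axis equals {−√(ab), √(ab)}. In other words, the ideal endpoints of every square hyperbola S_k(aI,bI) coincide with those of the equidistant line S_0(aI,bI). -/

import Mathlib

/-!
Since `exp (d(x, w) / 2) = (|x - w| + |x - w̄|) / (2 √(Im x · Im w))`, the hyperbolic distance
splits as `d(x, w) = renormDist w x - log (Im x)` with `renormDist w` continuous on all of `ℂ`.
So as `x` approaches a real point `t`, both `d(x, aI)` and `d(x, bI)` tend to `+∞` while their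
difference tends to `log (b (t² + a²) / (a (t² + b²)))`, whose sign is that of `t² - ab`. Hence
`d(x, aI)² - d(x, bI)² = (d(x, aI) - d(x, bI)) (d(x, aI) + d(x, bI))` tends to `±∞` at every real
`t` with `t² ≠ ab`. Near `t = ±√(ab)` both limits occur at real points arbitrarily close to `t`,
and the intermediate value theorem on the connected trace in `ℍ` of a small disc about `t`
gives points of `S_k` arbitrarily close to `t`.
-/

open UpperHalfPlane

noncomputable section

def ptI (a : ℝ) (ha : 0 < a) : UpperHalfPlane := ⟨a * Complex.I, by simpa using ha⟩

open Filter Topology Real ComplexConjugate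

lemma notMem_closure_image_of_eventually_ne {X Y β : Type*} [TopologicalSpace Y] {ι : X → Y}
    {f : X → β} {k : β} {y : Y} (h : ∀ᶠ x in comap ι (𝓝 y), f x ≠ k) :
    y ∉ closure (ι '' {x | f x = k}) := fun hy ↦ by
  obtain ⟨U, hU, hsub⟩ := mem_comap.1 h
  obtain ⟨_, hyU, x, hx, rfl⟩ := mem_closure_iff_nhds.1 hy U hU
  exact hsub hyU hx

lemma frequently_sq_gt_nhds {t : ℝ} (ht : t ≠ 0) : ∃ᶠ u in 𝓝 t, t ^ 2 < u ^ 2 := by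
  have hlim : Tendsto (t * ·) (𝓝[>] 1) (𝓝 t) :=
    ((continuous_const_mul t).tendsto' 1 t (mul_one t)).mono_left nhdsWithin_le_nhds
  refine hlim.frequently (Eventually.frequently ?_)
  filter_upwards [self_mem_nhdsWithin] with δ (hδ : 1 < δ)
  rw [mul_pow]
  exact lt_mul_of_one_lt_right (by positivity) (one_lt_pow₀ hδ two_ne_zero)

lemma frequently_sq_lt_nhds {t : ℝ} (ht : t ≠ 0) : ∃ᶠ u in 𝓝 t, u ^ 2 < t ^ 2 := by
  have hlim : Tendsto (t * ·) (𝓝[<] 1) (𝓝 t) :=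
    ((continuous_const_mul t).tendsto' 1 t (mul_one t)).mono_left nhdsWithin_le_nhds
  refine hlim.frequently (Eventually.frequently ?_)
  filter_upwards [Ioo_mem_nhdsLT one_pos] with δ ⟨hδ₀, hδ₁⟩
  rw [mul_pow]
  exact mul_lt_of_lt_one_right (by positivity) (pow_lt_one₀ hδ₀.le hδ₁ two_ne_zero)

namespace UpperHalfPlane

def renormDist (w : ℍ) (z : ℂ) : ℝ :=
  2 * log ((dist z w + dist z (conj (w : ℂ))) / 2) - log w.im

lemma dist_add_dist_conj_pos (w : ℍ) (z : ℂ) : 0 < dist z w + dist z (conj (w : ℂ)) := by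
  have hw : (w : ℂ) ≠ conj (w : ℂ) := fun h ↦ w.im_pos.ne' (by
    simpa using (Complex.conj_eq_iff_im.1 h.symm))
  exact (dist_pos.2 hw).trans_le (dist_triangle_left _ _ z)

lemma continuous_renormDist (w : ℍ) : Continuous (renormDist w) := by
  unfold renormDist
  fun_prop (disch := exact fun z ↦ (half_pos (dist_add_dist_conj_pos w z)).ne')

lemma dist_eq_renormDist_sub_log_im (x w : ℍ) : dist x w = renormDist w x - log x.im := by
  have hN := dist_add_dist_conj_pos w x
  have h := congrArg log (exp_half_dist x w)
  rw [log_exp, log_div hN.ne' (by positivity), log_mul two_ne_zero (by positivity),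
    log_sqrt (by positivity), log_mul x.im_pos.ne' w.im_pos.ne'] at h
  rw [renormDist, log_div hN.ne' two_ne_zero]
  linarith

lemma tendsto_im_comap_coe_ofReal (t : ℝ) :
    Tendsto im (comap (↑) (𝓝 (t : ℂ))) (𝓝[>] 0) :=
  tendsto_nhdsWithin_iff.2
    ⟨(Complex.continuous_im.tendsto (t : ℂ)).comp tendsto_comap, .of_forall im_pos⟩

lemma tendsto_dist_comap_coe_ofReal (w : ℍ) (t : ℝ) :
    Tendsto (fun x ↦ dist x w) (comap (↑) (𝓝 (t : ℂ))) atTop := by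
  simp only [dist_eq_renormDist_sub_log_im, sub_eq_add_neg]
  exact ((continuous_renormDist w).tendsto _).comp tendsto_comap |>.add_atTop
    (tendsto_neg_atBot_atTop.comp (tendsto_log_nhdsGT_zero.comp (tendsto_im_comap_coe_ofReal t)))

lemma tendsto_dist_sub_dist_comap_coe (z w : ℍ) (ζ : ℂ) :
    Tendsto (fun x ↦ dist x z - dist x w) (comap (↑) (𝓝 ζ))
      (𝓝 (renormDist z ζ - renormDist w ζ)) := by
  simp only [dist_eq_renormDist_sub_log_im, sub_sub_sub_cancel_right]
  exact (((continuous_renormDist z).tendsto _).sub ((continuous_renormDist w).tendsto _)).comp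
    tendsto_comap

lemma tendsto_sq_dist_sub_sq_dist_atTop {z w : ℍ} {t : ℝ}
    (h : renormDist w t < renormDist z t) :
    Tendsto (fun x ↦ dist x z ^ 2 - dist x w ^ 2) (comap (↑) (𝓝 (t : ℂ))) atTop := by
  simp only [sq_sub_sq]
  exact ((tendsto_dist_comap_coe_ofReal z t).atTop_add_atTop
    (tendsto_dist_comap_coe_ofReal w t)).atTop_mul_pos (sub_pos.2 h)
    (tendsto_dist_sub_dist_comap_coe z w t)

lemma tendsto_sq_dist_sub_sq_dist_atBot {z w : ℍ} {t : ℝ}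
    (h : renormDist z t < renormDist w t) :
    Tendsto (fun x ↦ dist x z ^ 2 - dist x w ^ 2) (comap (↑) (𝓝 (t : ℂ))) atBot := by
  simpa using tendsto_neg_atBot_iff.2 (tendsto_sq_dist_sub_sq_dist_atTop h)

lemma neBot_comap_coe_nhds {z : ℂ} (hz : 0 ≤ z.im) : (comap ((↑) : ℍ → ℂ) (𝓝 z)).NeBot := by
  rwa [comap_neBot_iff_frequently, ← mem_closure_iff_frequently, range_coe,
    Complex.closure_setOfPred_lt_im]

lemma isPreconnected_preimage_coe_ball (z : ℂ) (r : ℝ) :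
    IsPreconnected ((↑) ⁻¹' Metric.ball z r : Set ℍ) := by
  rw [← isEmbedding_coe.isInducing.isPreconnected_image, Set.image_preimage_eq_inter_range,
    range_coe]
  exact ((convex_ball z r).inter (convex_halfSpace_im_gt 0)).isPreconnected

lemma mem_closure_image_of_frequently_tendsto {f : ℍ → ℝ} (hf : Continuous f) (k : ℝ) {t : ℝ}
    (htop : ∃ᶠ u : ℝ in 𝓝 t, Tendsto f (comap (↑) (𝓝 (u : ℂ))) atTop)
    (hbot : ∃ᶠ u : ℝ in 𝓝 t, Tendsto f (comap (↑) (𝓝 (u : ℂ))) atBot) :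
    (t : ℂ) ∈ closure ((↑) '' {x : ℍ | f x = k}) := by
  refine Metric.mem_closure_iff.2 fun ε hε ↦ ?_
  have hnear : ∀ᶠ u : ℝ in 𝓝 t, (u : ℂ) ∈ Metric.ball (t : ℂ) ε :=
    Complex.continuous_ofReal.continuousAt.preimage_mem_nhds (Metric.ball_mem_nhds _ hε)
  have hU {u : ℝ} (hu : (u : ℂ) ∈ Metric.ball (t : ℂ) ε) :
      ∀ᶠ x : ℍ in comap (↑) (𝓝 (u : ℂ)), (x : ℂ) ∈ Metric.ball (t : ℂ) ε :=
    preimage_mem_comap (Metric.isOpen_ball.mem_nhds hu)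
  obtain ⟨uhi, huhi, hfhi⟩ := (hnear.and_frequently htop).exists
  obtain ⟨ulo, hulo, hflo⟩ := (hnear.and_frequently hbot).exists
  have := neBot_comap_coe_nhds (z := uhi) le_rfl
  have := neBot_comap_coe_nhds (z := ulo) le_rfl
  obtain ⟨xhi, hxhiU, hxhi⟩ := ((hU huhi).and (hfhi.eventually_ge_atTop k)).exists
  obtain ⟨xlo, hxloU, hxlo⟩ := ((hU hulo).and (hflo.eventually_le_atBot k)).exists
  obtain ⟨x, hxU, hx⟩ := (isPreconnected_preimage_coe_ball _ ε).intermediate_value hxloU hxhiU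
    hf.continuousOn ⟨hxlo, hxhi⟩
  exact ⟨x, ⟨x, hx, rfl⟩, Metric.mem_ball'.1 hxU⟩

end UpperHalfPlane

section ptI

variable {a b : ℝ}

lemma renormDist_ptI_ofReal (c : ℝ) (hc : 0 < c) (t : ℝ) :
    renormDist (ptI c hc) t = log ((t ^ 2 + c ^ 2) / c) := by
  have hdist : dist (t : ℂ) (ptI c hc) = √(t ^ 2 + c ^ 2) := by
    simp [Complex.dist_eq_re_im, ptI]
  have hdist_conj : dist (t : ℂ) (conj (ptI c hc : ℂ)) = √(t ^ 2 + c ^ 2) := by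
    simp [Complex.dist_eq_re_im, ptI]
  have him : (ptI c hc).im = c := by simp [ptI, UpperHalfPlane.im]
  rw [renormDist, hdist, hdist_conj, him, add_self_div_two, log_sqrt (by positivity),
    log_div (by positivity) hc.ne']
  ring

lemma tendsto_sq_dist_ptI_sub_sq_dist_ptI_atTop (ha : 0 < a) (hab : a < b) {t : ℝ}
    (ht : a * b < t ^ 2) :
    Tendsto (fun x ↦ dist x (ptI a ha) ^ 2 - dist x (ptI b (ha.trans hab)) ^ 2)
      (comap (↑) (𝓝 (t : ℂ))) atTop := by
  have hb := ha.trans hab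
  refine tendsto_sq_dist_sub_sq_dist_atTop ?_
  rw [renormDist_ptI_ofReal, renormDist_ptI_ofReal, log_lt_log_iff (by positivity) (by positivity),
    div_lt_div_iff₀ hb ha]
  nlinarith [mul_lt_mul_of_pos_right ht (sub_pos.2 hab)]

lemma tendsto_sq_dist_ptI_sub_sq_dist_ptI_atBot (ha : 0 < a) (hab : a < b) {t : ℝ}
    (ht : t ^ 2 < a * b) :
    Tendsto (fun x ↦ dist x (ptI a ha) ^ 2 - dist x (ptI b (ha.trans hab)) ^ 2)
      (comap (↑) (𝓝 (t : ℂ))) atBot := by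
  have hb := ha.trans hab
  refine tendsto_sq_dist_sub_sq_dist_atBot ?_
  rw [renormDist_ptI_ofReal, renormDist_ptI_ofReal, log_lt_log_iff (by positivity) (by positivity),
    div_lt_div_iff₀ ha hb]
  nlinarith [mul_lt_mul_of_pos_right ht (sub_pos.2 hab)]

lemma notMem_closure_squareHyperbola (ha : 0 < a) (hab : a < b) (k : ℝ) {t : ℝ}
    (ht : t ^ 2 ≠ a * b) :
    (t : ℂ) ∉ closure ((↑) '' {x : ℍ |
      dist x (ptI a ha) ^ 2 - dist x (ptI b (ha.trans hab)) ^ 2 = k}) := by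
  refine notMem_closure_image_of_eventually_ne ?_
  rcases ht.lt_or_gt with ht | ht
  · exact ((tendsto_sq_dist_ptI_sub_sq_dist_ptI_atBot ha hab ht).eventually_lt_atBot k).mono
      fun _ ↦ ne_of_lt
  · exact ((tendsto_sq_dist_ptI_sub_sq_dist_ptI_atTop ha hab ht).eventually_gt_atTop k).mono
      fun _ ↦ ne_of_gt

lemma mem_closure_squareHyperbola (ha : 0 < a) (hab : a < b) (k : ℝ) {t : ℝ}
    (ht : t ^ 2 = a * b) :
    (t : ℂ) ∈ closure ((↑) '' {x : ℍ |
      dist x (ptI a ha) ^ 2 - dist x (ptI b (ha.trans hab)) ^ 2 = k}) := by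
  have ht₀ : t ≠ 0 := by
    rintro rfl
    nlinarith [mul_pos ha (ha.trans hab)]
  refine mem_closure_image_of_frequently_tendsto (by fun_prop) k ?_ ?_
  · exact (frequently_sq_gt_nhds ht₀).mono fun u hu ↦
      tendsto_sq_dist_ptI_sub_sq_dist_ptI_atTop ha hab (ht ▸ hu)
  · exact (frequently_sq_lt_nhds ht₀).mono fun u hu ↦
      tendsto_sq_dist_ptI_sub_sq_dist_ptI_atBot ha hab (ht ▸ hu)

end ptI

theorem squareHyperbola_endpoints (a b : ℝ) (ha : 0 < a) (hab : a < b) (k : ℝ) :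
    closure ((fun x : UpperHalfPlane => (x : ℂ)) ''
        {x : UpperHalfPlane |
          dist x (ptI a ha) ^ 2 - dist x (ptI b (ha.trans hab)) ^ 2 = k})
      ∩ {z : ℂ | z.im = 0}
    = {(-(Real.sqrt (a * b)) : ℂ), ((Real.sqrt (a * b) : ℝ) : ℂ)} := by
  have hsq : √(a * b) ^ 2 = a * b := sq_sqrt (mul_pos ha (ha.trans hab)).le
  ext z
  simp only [Set.mem_inter_iff, Set.mem_ofPred_eq, Set.mem_insert_iff, Set.mem_singleton_iff]
  constructor
  · rintro ⟨hz, him⟩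
    obtain ⟨t, rfl⟩ : ∃ t : ℝ, (t : ℂ) = z := ⟨z.re, Complex.ext rfl him.symm⟩
    by_cases ht : t ^ 2 = a * b
    · rw [← hsq, sq_eq_sq_iff_eq_or_eq_neg] at ht
      rcases ht with rfl | rfl
      · exact .inr rfl
      · exact .inl (Complex.ofReal_neg _)
    · exact absurd hz (notMem_closure_squareHyperbola ha hab k ht)
  · rintro (rfl | rfl)
    · refine ⟨?_, by simp⟩
      simpa using mem_closure_squareHyperbola ha hab k (t := -√(a * b)) (by rwa [neg_sq])
    · exact ⟨mem_closure_squareHyperbola ha hab k hsq, by simp⟩
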